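/- A rank-2 tensor T on a Lorentzian vector space satisfies (T ₂×₂ T)_{ab} = T_{ac} T_b{}^c = f·g_{ab} for some scalar f if and only if the linear map v^a ↦ v^a T_a{}^b sends every null vector to a null or zero vector (i.e., T defines a null-cone preserving map). -/

import Mathlib

/-!
Since `η² = 1`, the Minkowski square of `tmap T k` is the quadratic form of the symmetric
tensor `sq2 T` at `k`. The theorem thus says that a symmetric bilinear form vanishes on the null
cone iff it is a multiple of the metric. Testing the form on the null vectors `e₀ ± eᵢ` forces
`S₀ᵢ = 0` and `Sᵢᵢ = -S₀₀`; then the null vector `e₀ + (3/5) eₐ + (4/5) e_b` forces `Sₐ_b = 0`.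
-/

noncomputable section

/-- Minkowski signature factors: (+1, -1, ..., -1). -/
def eta {n : ℕ} (i : Fin (n + 1)) : ℝ := if i = 0 then 1 else -1

/-- The Minkowski (Lorentzian) inner product of signature (+,-,...,-). -/
def mink {n : ℕ} (u v : Fin (n + 1) → ℝ) : ℝ := ∑ i, eta i * u i * v i

/-- A causal future-pointing vector. -/
def CausalFuture {n : ℕ} (u : Fin (n + 1) → ℝ) : Prop :=
  0 ≤ mink u u ∧ u ≠ 0 ∧ 0 < u 0

/-- A null future-pointing vector. -/
def NullFuture {n : ℕ} (u : Fin (n + 1) → ℝ) : Prop :=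
  mink u u = 0 ∧ u ≠ 0 ∧ 0 < u 0

/-- A timelike future-pointing vector. -/
def TimelikeFuture {n : ℕ} (u : Fin (n + 1) → ℝ) : Prop :=
  0 < mink u u ∧ 0 < u 0

/-- The Lorentzian metric as a matrix (covariant components). -/
def gMat {n : ℕ} : Matrix (Fin (n + 1)) (Fin (n + 1)) ℝ := Matrix.diagonal eta

/-- Contraction of a rank-2 covariant tensor with two vectors. -/
def quad {n : ℕ} (T : Matrix (Fin (n + 1)) (Fin (n + 1)) ℝ) (u v : Fin (n + 1) → ℝ) : ℝ :=
  ∑ a, ∑ b, u a * T a b * v b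

/-- The dominant property for rank-2 tensors. -/
def DP2 {n : ℕ} (T : Matrix (Fin (n + 1)) (Fin (n + 1)) ℝ) : Prop :=
  ∀ u v, CausalFuture u → CausalFuture v → 0 ≤ quad T u v

/-- (T ₂×₂ T)_{ab} = T_{ac} T_b{}^c : contraction on the second index of each factor. -/
def sq2 {n : ℕ} (T : Matrix (Fin (n + 1)) (Fin (n + 1)) ℝ) :
    Matrix (Fin (n + 1)) (Fin (n + 1)) ℝ :=
  Matrix.of fun a b => ∑ c, eta c * T a c * T b c

/-- (T ₁×₁ T)_{ab} = T_{ca} T^c{}_b : contraction on the first index of each factor. -/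
def sq1 {n : ℕ} (T : Matrix (Fin (n + 1)) (Fin (n + 1)) ℝ) :
    Matrix (Fin (n + 1)) (Fin (n + 1)) ℝ :=
  Matrix.of fun a b => ∑ c, eta c * T c a * T c b

/-- The linear map v^a ↦ v^a T_a{}^b defined by a rank-2 tensor T. -/
def tmap {n : ℕ} (T : Matrix (Fin (n + 1)) (Fin (n + 1)) ℝ) (v : Fin (n + 1) → ℝ) :
    Fin (n + 1) → ℝ := fun b => eta b * ∑ a, v a * T a b

/-- (A×B)_{ab} := A_{ca} B^c{}_b. -/
def xprod {n : ℕ} (A B : Matrix (Fin (n + 1)) (Fin (n + 1)) ℝ) :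
    Matrix (Fin (n + 1)) (Fin (n + 1)) ℝ :=
  Matrix.of fun a b => ∑ c, eta c * A c a * B c b

/-- The dominant property for rank-r covariant tensors. -/
def DP {n r : ℕ} (T : MultilinearMap ℝ (fun _ : Fin r => (Fin (n + 1) → ℝ)) ℝ) : Prop :=
  ∀ u : Fin r → (Fin (n + 1) → ℝ), (∀ i, CausalFuture (u i)) → 0 ≤ T u

open Matrix

variable {n : ℕ}

lemma eta_zero : eta (0 : Fin (n + 1)) = 1 := if_pos rfl

lemma eta_of_ne_zero {i : Fin (n + 1)} (hi : i ≠ 0) : eta i = -1 := if_neg hi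

lemma eta_mul_self (i : Fin (n + 1)) : eta i * eta i = 1 := by
  unfold eta; split_ifs <;> norm_num

lemma gMat_apply (i j : Fin (n + 1)) : (gMat : Matrix (Fin (n + 1)) (Fin (n + 1)) ℝ) i j =
    if i = j then eta i else 0 :=
  diagonal_apply ..

lemma mink_eq_toBilin' (u v : Fin (n + 1) → ℝ) : mink u v = toBilin' gMat u v := by
  simp only [mink, toBilin'_apply, gMat_apply, mul_ite, ite_mul, mul_zero, zero_mul,
    Finset.sum_ite_eq, Finset.mem_univ, if_true]
  exact Finset.sum_congr rfl fun i _ => by ring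

lemma sq2_isSymm (T : Matrix (Fin (n + 1)) (Fin (n + 1)) ℝ) : (sq2 T).IsSymm :=
  IsSymm.ext fun a b => by
    simp only [sq2, of_apply]
    exact Finset.sum_congr rfl fun c _ => by ring

lemma mink_tmap_self (T : Matrix (Fin (n + 1)) (Fin (n + 1)) ℝ) (k : Fin (n + 1) → ℝ) :
    mink (tmap T k) (tmap T k) = toBilin' (sq2 T) k k := by
  simp only [mink, tmap, toBilin'_apply, sq2, of_apply, Finset.mul_sum, Finset.sum_mul]
  rw [Finset.sum_comm]
  refine Finset.sum_congr rfl fun a _ => ?_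
  rw [Finset.sum_comm]
  refine Finset.sum_congr rfl fun c _ => Finset.sum_congr rfl fun b _ => ?_
  linear_combination (eta b * k a * T a b * k c * T c b) * eta_mul_self b

def VanishesOnNullCone (S : Matrix (Fin (n + 1)) (Fin (n + 1)) ℝ) : Prop :=
  ∀ k : Fin (n + 1) → ℝ, mink k k = 0 → k ≠ 0 → toBilin' S k k = 0

lemma vanishesOnNullCone_sq2_iff (T : Matrix (Fin (n + 1)) (Fin (n + 1)) ℝ) :
    VanishesOnNullCone (sq2 T) ↔
      ∀ k : Fin (n + 1) → ℝ, mink k k = 0 → k ≠ 0 → mink (tmap T k) (tmap T k) = 0 := by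
  simp only [VanishesOnNullCone, mink_tmap_self]

namespace VanishesOnNullCone

variable {S : Matrix (Fin (n + 1)) (Fin (n + 1)) ℝ}

lemma of_eq_smul_gMat {f : ℝ} (hS : S = f • gMat) : VanishesOnNullCone S := by
  intro k hk _
  rw [hS, map_smul, LinearMap.smul_apply, LinearMap.smul_apply, ← mink_eq_toBilin', hk,
    smul_zero]

lemma entry_sum_eq_zero_of_null₂ (hS : VanishesOnNullCone S) {i : Fin (n + 1)} (hi : i ≠ 0)
    {y : ℝ} (hy : y * y = 1) : S 0 0 + y * (S 0 i + S i 0) + y * y * S i i = 0 := by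
  set k : Fin (n + 1) → ℝ := Pi.single 0 1 + y • Pi.single i 1
  have hnull : mink k k = 0 := by
    simp only [k, mink_eq_toBilin', map_add, map_smul, LinearMap.add_apply, LinearMap.smul_apply,
      toBilin'_single, smul_eq_mul, gMat_apply, if_neg hi, if_neg hi.symm, eta_zero,
      eta_of_ne_zero hi, ↓reduceIte]
    linear_combination -hy
  have hne : k ≠ 0 := fun h => by simpa [k, hi.symm] using congrFun h 0
  have := hS k hnull hne
  simp only [k, map_add, map_smul, LinearMap.add_apply, LinearMap.smul_apply,
      toBilin'_single, smul_eq_mul] at this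
  linear_combination this

lemma entry_sum_eq_zero_of_null₃ (hS : VanishesOnNullCone S) {a b : Fin (n + 1)} (ha : a ≠ 0)
    (hb : b ≠ 0) (hab : a ≠ b) {x y : ℝ} (hxy : x * x + y * y = 1) :
    S 0 0 + x * (S 0 a + S a 0) + y * (S 0 b + S b 0) + x * x * S a a
      + x * y * (S a b + S b a) + y * y * S b b = 0 := by
  set k : Fin (n + 1) → ℝ := Pi.single 0 1 + x • Pi.single a 1 + y • Pi.single b 1
  have hnull : mink k k = 0 := by
    simp only [k, mink_eq_toBilin', map_add, map_smul, LinearMap.add_apply, LinearMap.smul_apply,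
      toBilin'_single, smul_eq_mul, gMat_apply, if_neg ha, if_neg ha.symm, if_neg hb,
      if_neg hb.symm, if_neg hab, if_neg hab.symm, eta_zero, eta_of_ne_zero ha,
      eta_of_ne_zero hb, ↓reduceIte]
    linear_combination -hxy
  have hne : k ≠ 0 := fun h => by simpa [k, ha.symm, hb.symm] using congrFun h 0
  have := hS k hnull hne
  simp only [k, map_add, map_smul, LinearMap.add_apply, LinearMap.smul_apply,
      toBilin'_single, smul_eq_mul] at this
  linear_combination this

lemma apply_zero_of_ne_zero (hS : VanishesOnNullCone S) (hsymm : S.IsSymm) {i : Fin (n + 1)}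
    (hi : i ≠ 0) : S 0 i = 0 := by
  have hpos := hS.entry_sum_eq_zero_of_null₂ hi (y := 1) (by norm_num)
  have hneg := hS.entry_sum_eq_zero_of_null₂ hi (y := -1) (by norm_num)
  linear_combination (hpos - hneg) / 4 - hsymm.apply 0 i / 2

lemma apply_self_of_ne_zero (hS : VanishesOnNullCone S) {i : Fin (n + 1)}
    (hi : i ≠ 0) : S i i = -S 0 0 := by
  have hpos := hS.entry_sum_eq_zero_of_null₂ hi (y := 1) (by norm_num)
  have hneg := hS.entry_sum_eq_zero_of_null₂ hi (y := -1) (by norm_num)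
  linear_combination (hpos + hneg) / 2

lemma apply_of_ne (hS : VanishesOnNullCone S) (hsymm : S.IsSymm) {a b : Fin (n + 1)} (ha : a ≠ 0)
    (hb : b ≠ 0) (hab : a ≠ b) : S a b = 0 := by
  have h := hS.entry_sum_eq_zero_of_null₃ ha hb hab (x := 3 / 5) (y := 4 / 5) (by norm_num)
  rw [hsymm.apply 0 a, hsymm.apply 0 b, hsymm.apply a b, hS.apply_zero_of_ne_zero hsymm ha,
    hS.apply_zero_of_ne_zero hsymm hb, hS.apply_self_of_ne_zero ha,
    hS.apply_self_of_ne_zero hb] at h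
  linear_combination 25 / 24 * h

theorem eq_smul_gMat (hS : VanishesOnNullCone S) (hsymm : S.IsSymm) : S = S 0 0 • gMat := by
  ext a b
  rw [Matrix.smul_apply, gMat_apply, smul_eq_mul]
  rcases eq_or_ne a b with rfl | hab
  · rcases eq_or_ne a 0 with rfl | ha
    · rw [if_pos rfl, eta_zero, mul_one]
    · rw [if_pos rfl, eta_of_ne_zero ha, hS.apply_self_of_ne_zero ha, mul_neg_one]
  · rw [if_neg hab, mul_zero]
    rcases eq_or_ne a 0 with rfl | ha
    · exact hS.apply_zero_of_ne_zero hsymm hab.symm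
    rcases eq_or_ne b 0 with rfl | hb
    · rw [← hsymm.apply]
      exact hS.apply_zero_of_ne_zero hsymm ha
    · exact hS.apply_of_ne hsymm ha hb hab

end VanishesOnNullCone

theorem vanishesOnNullCone_iff {S : Matrix (Fin (n + 1)) (Fin (n + 1)) ℝ} (hsymm : S.IsSymm) :
    VanishesOnNullCone S ↔ ∃ f : ℝ, S = f • gMat :=
  ⟨fun hS => ⟨_, hS.eq_smul_gMat hsymm⟩, fun ⟨_, hf⟩ => .of_eq_smul_gMat hf⟩

/-- T_{ac}T_b{}^c = f·g_{ab} for some f iff the map v ↦ v^a T_a{}^b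
sends every null vector to a null or zero vector. -/
theorem stmt11 {n : ℕ} (T : Matrix (Fin (n + 1)) (Fin (n + 1)) ℝ) :
    (∃ f : ℝ, sq2 T = f • gMat) ↔
      ∀ k : Fin (n + 1) → ℝ, mink k k = 0 → k ≠ 0 →
        mink (tmap T k) (tmap T k) = 0 := by
  rw [← vanishesOnNullCone_iff (sq2_isSymm T), vanishesOnNullCone_sq2_iff]
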